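/- (Key combinatorial step in the proof of Lemma 4) Let μ̂ = (μ₁,…,μ_{r+1}) be a partition with exactly r+1 parts satisfying μ_{r+1} ≥ s+1. Then every admissible tableau b on the Young diagram of μ̂ satisfies b(r+1,1) = r+1 or b(r+1,1) = r+2. -/

import Mathlib

open Complex Filter Topology

namespace AnalyticBethe

/-- The data of the analytic Bethe ansatz for `sl(r+1|s+1)`:
a generic deformation parameter `q` (with a fixed logarithm `Lq`),
Bethe roots `root a j` of each color `a ∈ {1,…,r+s+1}` (0-indexed here),
and inhomogeneities `w j` together with the parameters `bw j` (the `(r+1)`-th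
Kac–Dynkin labels of the quantum space) at each of `L` sites. -/
structure Setup (r s : ℕ) where
  q : ℂ
  Lq : ℂ
  hexp : Complex.exp Lq = q
  hq0 : q ≠ 0
  hgen : ∀ n : ℕ, 0 < n → q ^ n ≠ 1
  Nb : Fin (r + s + 1) → ℕ
  root : (a : Fin (r + s + 1)) → Fin (Nb a) → ℂ
  L : ℕ
  w : Fin L → ℂ
  bw : Fin L → ℂ

variable {r s : ℕ}

/-- The `q`-number `[u] = (q^u - q^{-u})/(q - q⁻¹)`. -/
noncomputable def Setup.br (S : Setup r s) (u : ℂ) : ℂ :=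
  (Complex.exp (u * S.Lq) - Complex.exp (-(u * S.Lq))) / (S.q - S.q⁻¹)

/-- `Q_a(u) = ∏_j [u - u_j^{(a)}]` for `1 ≤ a ≤ r+s+1`, and `Q_0 = Q_{r+s+2} = 1`. -/
noncomputable def Setup.Q (S : Setup r s) (a : ℕ) (u : ℂ) : ℂ :=
  if h : 1 ≤ a ∧ a ≤ r + s + 1 then
    have ha : a - 1 < r + s + 1 := by omega
    ∏ j : Fin (S.Nb ⟨a - 1, ha⟩), S.br (u - S.root ⟨a - 1, ha⟩ j)
  else 1

/-- The vacuum parts `ψ_a(u)`. -/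
noncomputable def Setup.psi (S : Setup r s) (a : ℕ) (u : ℂ) : ℂ :=
  if a ≤ r + 1 then 1
  else ∏ j : Fin S.L,
    S.br (u - S.w j + (r : ℂ) + 1 - S.bw j) / S.br (u - S.w j + (r : ℂ) + 1 + S.bw j)

/-- The functions `z(a;u)`, `a ∈ J = {1,…,r+s+2}`. -/
noncomputable def Setup.z (S : Setup r s) (a : ℕ) (u : ℂ) : ℂ :=
  if a ≤ r + 1 then
    S.psi a u * S.Q (a - 1) (u + (a : ℂ) + 1) * S.Q a (u + (a : ℂ) - 2) /
      (S.Q (a - 1) (u + (a : ℂ) - 1) * S.Q a (u + (a : ℂ)))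
  else
    S.psi a u * S.Q (a - 1) (u + 2 * (r : ℂ) - (a : ℂ) + 1) *
        S.Q a (u + 2 * (r : ℂ) - (a : ℂ) + 4) /
      (S.Q (a - 1) (u + 2 * (r : ℂ) - (a : ℂ) + 3) *
        S.Q a (u + 2 * (r : ℂ) - (a : ℂ) + 2))

/-- The denominator of `z(a;u)` coming from the `Q`-functions
(the vacuum parts `ψ` are disregarded). -/
noncomputable def Setup.zDen (S : Setup r s) (a : ℕ) (u : ℂ) : ℂ :=
  if a ≤ r + 1 then S.Q (a - 1) (u + (a : ℂ) - 1) * S.Q a (u + (a : ℂ))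
  else S.Q (a - 1) (u + 2 * (r : ℂ) - (a : ℂ) + 3) *
       S.Q a (u + 2 * (r : ℂ) - (a : ℂ) + 2)

/-- The bilinear pairing `(α_a|α_b)` of the distinguished simple roots of `sl(r+1|s+1)`. -/
def cartan (r : ℕ) (a b : ℕ) : ℤ :=
  if a = b then (if a ≤ r then 2 else if a = r + 1 then 0 else -2)
  else if b = a + 1 ∨ a = b + 1 then (if min a b ≤ r then -1 else 1)
  else 0

/-- The Bethe ansatz equations (BAE).  Here the color `a ∈ {1,…,r+s+1}` is represented
by `a.1 + 1` for `a : Fin (r+s+1)`; `t_a = 1` for `a ≤ r+1` and `t_a = -1` otherwise,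
and the Kac–Dynkin labels of the quantum space are `b_j^{(a)} = δ_{a,r+1}·bw j`. -/
def Setup.BAE (S : Setup r s) : Prop :=
  ∀ (a : Fin (r + s + 1)) (k : Fin (S.Nb a)),
    -(∏ j : Fin S.L,
        S.br (S.root a k - S.w j +
          (if a.1 + 1 = r + 1 then (1 : ℂ) else 0) * S.bw j /
            (if a.1 + 1 ≤ r + 1 then (1 : ℂ) else -1)) /
        S.br (S.root a k - S.w j -
          (if a.1 + 1 = r + 1 then (1 : ℂ) else 0) * S.bw j /
            (if a.1 + 1 ≤ r + 1 then (1 : ℂ) else -1)))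
    = (-1 : ℂ) ^ (if a.1 + 1 = r + 1 then 1 else 0) *
      ∏ b : Fin (r + s + 1),
        S.Q (b.1 + 1) (S.root a k + (cartan r (a.1 + 1) (b.1 + 1) : ℂ)) /
          S.Q (b.1 + 1) (S.root a k - (cartan r (a.1 + 1) (b.1 + 1) : ℂ))

/-- Genericity of the Bethe roots: each `Q_a` has a simple zero at each Bethe root of
color `a`, and no `Q_b` vanishes at any other integral shift of a Bethe root; hence all
potential poles arising from zeros of `Q`-functions in denominators are simple. -/
def Setup.Generic (S : Setup r s) : Prop :=
  (∀ (a : Fin (r + s + 1)) (k : Fin (S.Nb a)),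
      deriv (S.Q (a.1 + 1)) (S.root a k) ≠ 0) ∧
  (∀ (a : Fin (r + s + 1)) (k : Fin (S.Nb a)) (b : ℕ) (m : ℤ),
      1 ≤ b → b ≤ r + s + 1 → (b ≠ a.1 + 1 ∨ m ≠ 0) →
      S.Q b (S.root a k + (m : ℂ)) ≠ 0)

/-- A Young diagram, presented as an antitone, eventually-zero sequence of row lengths.
`part i` is the length `μ_{i+1}` of the `(i+1)`-th row (0-indexed). -/
structure YD where
  part : ℕ → ℕ
  len : ℕ
  anti : ∀ ⦃i j : ℕ⦄, i ≤ j → part j ≤ part i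
  zero : ∀ i, len ≤ i → part i = 0

/-- `conj μ j = μ′_{j+1}`, the length of the `(j+1)`-th column (0-indexed). -/
def YD.conj (μ : YD) (j : ℕ) : ℕ :=
  ((Finset.range μ.len).filter (fun i => j < μ.part i)).card

/-- The empty Young diagram. -/
def emptyYD : YD where
  part := fun _ => 0
  len := 0
  anti := fun _ _ _ => le_refl 0
  zero := fun _ _ => rfl

/-- The rectangular Young diagram `(m^a)` with `a` rows of length `m`. -/
def rect (m a : ℕ) : YD where
  part := fun i => if i < a then m else 0
  len := a
  anti := by intro i j hij; (try simp only); split_ifs <;> omega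
  zero := by intro i hi; (try simp only); rw [if_neg (by omega)]

/-- `μ + (c^k)`: add `c` columns to the first `k` rows. -/
def muPlus (mu : YD) (c k : ℕ) : YD where
  part := fun i => if i < k then mu.part i + c else mu.part i
  len := max mu.len k
  anti := by
    intro i j hij
    have h := mu.anti hij
    (try simp only); split_ifs <;> omega
  zero := by
    intro i hi
    have h1 : mu.len ≤ i := le_trans (le_max_left _ _) hi
    have h2 : k ≤ i := le_trans (le_max_right _ _) hi
    try simp only
    rw [if_neg (by omega), mu.zero i h1]

/-- The first `k` rows `(μ₁,…,μ_k)` of `μ`. -/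
def truncate (mu : YD) (k : ℕ) : YD where
  part := fun i => if i < k then mu.part i else 0
  len := min mu.len k
  anti := by
    intro i j hij
    have h := mu.anti hij
    (try simp only); split_ifs <;> omega
  zero := by
    intro i hi
    try simp only
    split_ifs with h
    · exact mu.zero i (by omega)
    · rfl

/-- The rows of `μ` below the `k`-th one: `(μ_{k+1}, μ_{k+2}, …)`. -/
def shiftRows (mu : YD) (k : ℕ) : YD where
  part := fun i => mu.part (i + k)
  len := mu.len - k
  anti := fun i j hij => mu.anti (by omega)
  zero := fun i hi => mu.zero (i + k) (by omega)

/-- The cells of a skew Young diagram `λ ⊂ μ`, in (1-indexed) matrix coordinates: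
`(i,j)` with `1 ≤ i`, `λ_i < j ≤ μ_i`. -/
def cells (lam mu : YD) : Finset (ℕ × ℕ) :=
  (Finset.Icc 1 mu.len ×ˢ Finset.Icc 1 (mu.part 0)).filter
    (fun p => lam.part (p.1 - 1) < p.2 ∧ p.2 ≤ mu.part (p.1 - 1))

abbrev Cell (lam mu : YD) := {x : ℕ × ℕ // x ∈ cells lam mu}

/-- A tableau on the skew diagram `λ ⊂ μ`: an assignment of an element of
`J = {1,…,r+s+2}` (encoded by `Fin (r+s+2)`) to every cell. -/
abbrev Tab (r s : ℕ) (lam mu : YD) := Cell lam mu → Fin (r + s + 2)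

/-- The entry of a tableau at a cell, as an element of `J = {1,…,r+s+2}`. -/
def entry {lam mu : YD} (t : Tab r s lam mu) (p : Cell lam mu) : ℕ := (t p).1 + 1

/-- Admissibility of a tableau: entries weakly increase along rows and down columns,
two equal adjacent entries in a row must lie in `J₊ = {1,…,r+1}`, and two equal adjacent
entries in a column must lie in `J₋ = {r+2,…,r+s+2}`. -/
def Adm (r s : ℕ) (lam mu : YD) (t : Tab r s lam mu) : Prop :=
  ∀ p q : Cell lam mu,
    (q.1.1 = p.1.1 ∧ q.1.2 = p.1.2 + 1 →
      entry t p ≤ entry t q ∧ (entry t p = entry t q → entry t p ≤ r + 1)) ∧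
    (q.1.1 = p.1.1 + 1 ∧ q.1.2 = p.1.2 →
      entry t p ≤ entry t q ∧ (entry t p = entry t q → r + 2 ≤ entry t p))

open Classical in
/-- The dressed vacuum form `T_{λ⊂μ}(u)`:
`∑_{admissible b} ∏_{(i,j)} (−1)^{p(b(i,j))} z(b(i,j); u − μ₁ + μ₁′ − 2i + 2j)`. -/
noncomputable def Tfun (S : Setup r s) (lam mu : YD) (u : ℂ) : ℂ :=
  ∑ t : Tab r s lam mu,
    if Adm r s lam mu t then
      ∏ p : Cell lam mu,
        (-1 : ℂ) ^ (if entry t p ≤ r + 1 then 0 else 1) *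
          S.z (entry t p)
            (u - (mu.part 0 : ℂ) + (mu.conj 0 : ℂ) - 2 * (p.1.1 : ℂ) + 2 * (p.1.2 : ℂ))
    else 0

/-- Admissibility with all entries restricted to `J₋ = {r+2,…,r+s+2}`. -/
def AdmH (r s : ℕ) (nu : YD) (t : Tab r s emptyYD nu) : Prop :=
  Adm r s emptyYD nu t ∧ ∀ p : Cell emptyYD nu, r + 2 ≤ entry t p

open Classical in
/-- `H_ν(u)`: the same tableau sum as `T_ν(u)`, restricted to tableaux with all
entries in `J₋`. -/
noncomputable def Hfun (S : Setup r s) (nu : YD) (u : ℂ) : ℂ :=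
  ∑ t : Tab r s emptyYD nu,
    if AdmH r s nu t then
      ∏ p : Cell emptyYD nu,
        (-1 : ℂ) ^ (if entry t p ≤ r + 1 then 0 else 1) *
          S.z (entry t p)
            (u - (nu.part 0 : ℂ) + (nu.conj 0 : ℂ) - 2 * (p.1.1 : ℂ) + 2 * (p.1.2 : ℂ))
    else 0

/-- The potential poles of `T_{λ⊂μ}`: the points where the `Q`-denominator of some
`z`-factor of some admissible summand vanishes (vacuum parts disregarded). -/
def PotPole (S : Setup r s) (lam mu : YD) : Set ℂ :=
  {p | ∃ t : Tab r s lam mu, Adm r s lam mu t ∧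
    ∃ q : Cell lam mu,
      S.zDen (entry t q)
        (p - (mu.part 0 : ℂ) + (mu.conj 0 : ℂ) - 2 * (q.1.1 : ℂ) + 2 * (q.1.2 : ℂ)) = 0}

/-- The potential poles of `H_ν` (vacuum parts disregarded). -/
def PotPoleH (S : Setup r s) (nu : YD) : Set ℂ :=
  {p | ∃ t : Tab r s emptyYD nu, AdmH r s nu t ∧
    ∃ q : Cell emptyYD nu,
      S.zDen (entry t q)
        (p - (nu.part 0 : ℂ) + (nu.conj 0 : ℂ) - 2 * (q.1.1 : ℂ) + 2 * (q.1.2 : ℂ)) = 0}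

/-- The deformed dressed vacuum form `T̃_{μ;c}(u)` for `c ∈ ℂ`. -/
noncomputable def Ttilde (S : Setup r s) (mu : YD) (c : ℂ) (u : ℂ) : ℂ :=
  S.Q (r + 1) (u - c + (mu.conj 0 : ℂ) - (mu.part 0 : ℂ) - (r : ℂ) - 1) /
    S.Q (r + 1) (u + c + (mu.conj 0 : ℂ) - (mu.part 0 : ℂ) - (r : ℂ) - 1) *
    Tfun S emptyYD (truncate mu (r + 1)) (u + (mu.conj 0 : ℂ) + c - (r : ℂ) - 1) *
    Hfun S (shiftRows mu (r + 1))
      (u - (mu.part 0 : ℂ) + (mu.part (r + 1) : ℂ) - c - (r : ℂ) - 1)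

/-- The potential poles of `T̃_{μ;c}` (vacuum parts disregarded). -/
def PotPoleTilde (S : Setup r s) (mu : YD) (c : ℂ) : Set ℂ :=
  {p | S.Q (r + 1) (p + c + (mu.conj 0 : ℂ) - (mu.part 0 : ℂ) - (r : ℂ) - 1) = 0 ∨
    (p + (mu.conj 0 : ℂ) + c - (r : ℂ) - 1) ∈ PotPole S emptyYD (truncate mu (r + 1)) ∨
    (p - (mu.part 0 : ℂ) + (mu.part (r + 1) : ℂ) - c - (r : ℂ) - 1) ∈
      PotPoleH S (shiftRows mu (r + 1))}

/-- `T̃^{r+1}_{c+s+1}(u)` for `c ∈ ℂ`. -/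
noncomputable def TtildeRect (S : Setup r s) (c : ℂ) (u : ℂ) : ℂ :=
  S.Q (r + 1) (u - c - (s : ℂ) - 1) / S.Q (r + 1) (u + c - (s : ℂ) - 1) *
    Tfun S emptyYD (rect (s + 1) (r + 1)) (u + c)

/-- The potential poles of `T̃^{r+1}_{c+s+1}` (vacuum parts disregarded). -/
def PotPoleTildeRect (S : Setup r s) (c : ℂ) : Set ℂ :=
  {p | S.Q (r + 1) (p + c - (s : ℂ) - 1) = 0 ∨
       (p + c) ∈ PotPole S emptyYD (rect (s + 1) (r + 1))}

/-- `T^a(u) = T_{(1^a)}(u)` extended by the conventions `T^0 = 1`, `T^a = 0` for `a < 0`. -/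
noncomputable def Tcol (S : Setup r s) (a : ℤ) (u : ℂ) : ℂ :=
  if a < 0 then 0 else if a = 0 then 1 else Tfun S emptyYD (rect 1 a.toNat) u

/-- `T_m^1(u) = T_{(m)}(u)` extended by the conventions `T_0^1 = 1`, `T_m^1 = 0` for `m < 0`. -/
noncomputable def Trow (S : Setup r s) (m : ℤ) (u : ℂ) : ℂ :=
  if m < 0 then 0 else if m = 0 then 1 else Tfun S emptyYD (rect m.toNat 1) u

/-- `H_1^a(u) = H_{(1^a)}(u)` extended by the conventions `H_1^0 = 1`, `H_1^a = 0` for `a < 0`. -/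
noncomputable def Hcol (S : Setup r s) (a : ℤ) (u : ℂ) : ℂ :=
  if a < 0 then 0 else if a = 0 then 1 else Hfun S (rect 1 a.toNat) u

@[simp]
lemma emptyYD_part (i : ℕ) : emptyYD.part i = 0 := rfl

lemma mem_cells_iff {lam mu : YD} {i j : ℕ} :
    (i, j) ∈ cells lam mu ↔
      1 ≤ i ∧ i ≤ mu.len ∧ lam.part (i - 1) < j ∧ j ≤ mu.part (i - 1) := by
  have := mu.anti (Nat.zero_le (i - 1))
  simp only [cells, Finset.mem_filter, Finset.mem_product, Finset.mem_Icc]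
  omega

lemma entry_le {lam mu : YD} (t : Tab r s lam mu) (p : Cell lam mu) :
    entry t p ≤ r + s + 2 :=
  (t p).isLt

lemma one_le_entry {lam mu : YD} (t : Tab r s lam mu) (p : Cell lam mu) : 1 ≤ entry t p :=
  Nat.le_add_left 1 _

/-- Equal entries in a column lie in `J₋`, so down a column the entries increase strictly
until they reach `J₋`. -/
lemma Adm.min_le_entry {mu : YD} {t : Tab r s emptyYD mu} (ht : Adm r s emptyYD mu t) :
    ∀ {i j : ℕ} (h : (i, j) ∈ cells emptyYD mu), min i (r + 2) ≤ entry t ⟨(i, j), h⟩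
  | 0, _, h => by simp [mem_cells_iff] at h
  | 1, _, h => (min_le_left _ _).trans (one_le_entry t _)
  | i + 2, j, h => by
    obtain ⟨-, hi, hj, hjμ⟩ := mem_cells_iff.1 h
    have hμ := mu.anti (Nat.le_succ i)
    have hup : (i + 1, j) ∈ cells emptyYD mu :=
      mem_cells_iff.2 ⟨by omega, by omega, hj, by simpa using hμ.trans' hjμ⟩
    have hih := ht.min_le_entry hup
    have hcol := (ht ⟨_, hup⟩ ⟨_, h⟩).2 ⟨rfl, rfl⟩
    omega

/-- Equal entries in a row lie in `J₊`, so once a row reaches `J₋` its entries increase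
strictly. -/
lemma Adm.entry_add_le {lam mu : YD} {t : Tab r s lam mu} (ht : Adm r s lam mu t)
    {i j : ℕ} (hp : (i, j) ∈ cells lam mu) (hJ : r + 2 ≤ entry t ⟨(i, j), hp⟩) :
    ∀ {k : ℕ} (hq : (i, j + k) ∈ cells lam mu),
      entry t ⟨(i, j), hp⟩ + k ≤ entry t ⟨(i, j + k), hq⟩
  | 0, _ => le_rfl
  | k + 1, hq => by
    obtain ⟨hi, hil, hj, -⟩ := mem_cells_iff.1 hp
    obtain ⟨-, -, -, hkμ⟩ := mem_cells_iff.1 hq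
    have hprev : (i, j + k) ∈ cells lam mu := mem_cells_iff.2 ⟨hi, hil, by omega, by omega⟩
    have hih := ht.entry_add_le hp hJ hprev
    have hrow := (ht ⟨_, hprev⟩ ⟨_, hq⟩).1 ⟨rfl, rfl⟩
    omega

theorem corner_entry_general (r s : ℕ) (mu : YD)
    (h2 : s + 1 ≤ mu.part r)
    (t : Tab r s emptyYD mu) (ht : Adm r s emptyYD mu t)
    (hc : ((r + 1 : ℕ), (1 : ℕ)) ∈ cells emptyYD mu) :
    entry t ⟨((r + 1 : ℕ), (1 : ℕ)), hc⟩ = r + 1 ∨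
    entry t ⟨((r + 1 : ℕ), (1 : ℕ)), hc⟩ = r + 2 := by
  have hcol := ht.min_le_entry hc
  have hend : (r + 1, 1 + s) ∈ cells emptyYD mu :=
    mem_cells_iff.2 ⟨by omega, (mem_cells_iff.1 hc).2.1, by simp, by simpa [add_comm] using h2⟩
  by_cases hJ : r + 2 ≤ entry t ⟨_, hc⟩
  · have hrow := ht.entry_add_le hc hJ hend
    have := entry_le t ⟨_, hend⟩
    omega
  · omega

/-- key combinatorial step in the proof of Lemma 4: let
`μ̂ = (μ₁,…,μ_{r+1})` be a partition with exactly `r+1` parts and `μ_{r+1} ≥ s+1`.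
Then every admissible tableau `b` on `μ̂` has `b(r+1,1) = r+1` or `b(r+1,1) = r+2`. -/
theorem corner_entry (r s : ℕ) (mu : YD)
    (h2 : s + 1 ≤ mu.part r) (h3 : mu.part (r + 1) = 0)
    (t : Tab r s emptyYD mu) (ht : Adm r s emptyYD mu t)
    (hc : ((r + 1 : ℕ), (1 : ℕ)) ∈ cells emptyYD mu) :
    entry t ⟨((r + 1 : ℕ), (1 : ℕ)), hc⟩ = r + 1 ∨
    entry t ⟨((r + 1 : ℕ), (1 : ℕ)), hc⟩ = r + 2 :=
  corner_entry_general r s mu h2 t ht hc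

end AnalyticBethe
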